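/- Suppose for each intermediate degree-p step of a tower one has the formula λ' − 1 = p(λ − 1) + Σ_w (e_w − 1) over branch components, where branch indices are multiplicative in towers (e(w/v) = e(w/u)·e(u/v)) and a component u over v either: (branched case) has a unique w over it with e(w/u) = p, or (decomposed case) has exactly p components w_1,…,w_p over it each with e(w_i/u) = 1. Then by induction the formula λ_N − 1 = p^{m}(λ_M − 1) + Σ_w (e_w − 1) holds for a composite of m degree-p steps, using the identities p(e(u/v) − 1) + (e(w/u) − 1) = e(w/v) − 1 when e(w/u) = p and e(w/v) = p·e(u/v), and p(e(u/v) − 1) + Σ_{i=1}^p (e(w_i/u) − 1) = Σ_{i=1}^p (e(w_i/v) − 1) when each e(w_i/u) = 1 and e(w_i/v) = e(u/v). -/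

import Mathlib

/-!
Let `e_n(u)` (`towerIndex n u`) be the ramification index of a component `u` at level `n` over
the bottom of the tower, so that `e_{n+1}(w) = e_n(π w) · eStep(w)`. Grouping the defect
`Σ_w (e_{n+1}(w) − 1)` along the fibres of `π`, each fibre over `u` contributes
`p (e_n(u) − 1) + Σ_w (eStep(w) − 1)`: in the branched case because
`e p − 1 = p (e − 1) + (p − 1)`, in the decomposed case because the fibre consists of `p` copies
of `e − 1`. Substituting this into the degree-`p` formula at each step gives the composite
formula by induction on the number of steps.
-/

open Finset

section Step

variable {α β : Type*} (f : β → α) (s : β → ℕ) (p : ℕ)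

def BranchedOrDecomposed (u : α) : Prop :=
  ((∃! w, f w = u) ∧ ∀ w, f w = u → s w = p) ∨
    (Nat.card {w // f w = u} = p ∧ ∀ w, f w = u → s w = 1)

variable {f s p}

theorem sum_fiber_mul_sub_one [Fintype β] [DecidableEq α] {u : α}
    (h : BranchedOrDecomposed f s p u) (x : ℤ) :
    ∑ w : {w // f w = u}, (x * s w - 1) = p * (x - 1) + ∑ w : {w // f w = u}, ((s w : ℤ) - 1) := by
  rcases h with ⟨⟨w₀, hw₀, huniq⟩, hs⟩ | ⟨hcard, hs⟩
  · have : Unique {w // f w = u} := ⟨⟨⟨w₀, hw₀⟩⟩, fun w ↦ Subtype.ext (huniq w w.2)⟩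
    simp only [Fintype.sum_unique, hs _ (default : {w // f w = u}).2]
    ring
  · have hs' : ∀ w : {w // f w = u}, s w = 1 := fun w ↦ hs w w.2
    simp only [hs', Nat.cast_one, mul_one, sub_self, sum_const_zero, add_zero, sum_const,
      card_univ, ← Nat.card_eq_fintype_card, hcard, nsmul_eq_mul]

theorem sum_mul_sub_one_eq [Fintype α] [Fintype β] (h : ∀ u, BranchedOrDecomposed f s p u)
    (e : α → ℤ) :
    ∑ w, (e (f w) * s w - 1) = p * ∑ u, (e u - 1) + ∑ w, ((s w : ℤ) - 1) := by
  classical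
  rw [← Fintype.sum_fiberwise f, ← Fintype.sum_fiberwise f (fun w ↦ (s w : ℤ) - 1), mul_sum,
    ← sum_add_distrib]
  refine sum_congr rfl fun u _ ↦ ?_
  simp only [fun w : {w // f w = u} ↦ congrArg e w.2]
  exact sum_fiber_mul_sub_one (h u) (e u)

end Step

section Tower

variable {C : ℕ → Type*} (π : ∀ n, C (n + 1) → C n) (eStep : ∀ n, C (n + 1) → ℕ)

def towerIndex : ∀ n, C n → ℕ
  | 0, _ => 1
  | n + 1, w => towerIndex n (π n w) * eStep n w

variable {π eStep}

theorem towerIndex_comp_eq_prod {m : ℕ} (proj : ∀ n, C m → C n)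
    (hproj : ∀ n, n < m → ∀ w, proj n w = π n (proj (n + 1) w)) (w : C m) :
    ∀ n, n ≤ m → towerIndex π eStep n (proj n w) = ∏ k ∈ range n, eStep k (proj (k + 1) w)
  | 0, _ => rfl
  | n + 1, (hn : n < m) => by
    rw [towerIndex, ← hproj n hn w, towerIndex_comp_eq_prod proj hproj w n hn.le,
      prod_range_succ]

theorem sub_one_eq_pow_mul_add_sum_towerIndex [∀ n, Fintype (C n)] {p m : ℕ} (lam : ℕ → ℤ)
    (hdicho : ∀ n, n < m → ∀ u, BranchedOrDecomposed (π n) (eStep n) p u)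
    (hstep : ∀ n, n < m →
      lam (n + 1) - 1 = p * (lam n - 1) + ∑ w : C (n + 1), ((eStep n w : ℤ) - 1)) :
    ∀ n, n ≤ m →
      lam n - 1 = (p : ℤ) ^ n * (lam 0 - 1) + ∑ u : C n, ((towerIndex π eStep n u : ℤ) - 1)
  | 0, _ => by simp [towerIndex]
  | n + 1, (hn : n < m) => by
    have hdefect := sum_mul_sub_one_eq (hdicho n hn) (fun u ↦ (towerIndex π eStep n u : ℤ))
    simp only [towerIndex, Nat.cast_mul]
    rw [hstep n hn, sub_one_eq_pow_mul_add_sum_towerIndex lam hdicho hstep n hn.le, hdefect]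
    ring

end Tower

theorem kida_induction_step_general
    (p m : ℕ)
    (C : ℕ → Type) [∀ n, Fintype (C n)]
    (π : ∀ n, C (n + 1) → C n)
    (eStep : ∀ n, C (n + 1) → ℕ)
    (proj : ∀ n, C m → C n)
    (hproj_top : proj m = id)
    (hproj : ∀ n, n < m → ∀ w : C m, proj n w = π n (proj (n + 1) w))
    (lam : ℕ → ℤ)
    (hdicho : ∀ n, n < m → ∀ u : C n,
      ((∃! w : C (n + 1), π n w = u) ∧ (∀ w, π n w = u → eStep n w = p)) ∨
      (Nat.card {w : C (n + 1) // π n w = u} = p ∧ ∀ w, π n w = u → eStep n w = 1))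
    (hstep : ∀ n, n < m →
      lam (n + 1) - 1 = p * (lam n - 1) + ∑ w : C (n + 1), ((eStep n w : ℤ) - 1)) :
    lam m - 1 = (p : ℤ) ^ m * (lam 0 - 1) +
      ∑ w : C m, ((∏ k ∈ Finset.range m, (eStep k (proj (k + 1) w) : ℤ)) - 1) := by
  have hindex : ∀ w : C m,
      towerIndex π eStep m w = ∏ k ∈ range m, eStep k (proj (k + 1) w) := fun w ↦ by
    simpa [hproj_top] using towerIndex_comp_eq_prod proj hproj w m le_rfl
  rw [sub_one_eq_pow_mul_add_sum_towerIndex lam hdicho hstep m le_rfl]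
  simp only [hindex, Nat.cast_prod]

/-- **(Subsection 7.3: the induction step in Kida's formula.)**
Consider a tower of `m` degree-`p` steps: at level `n` there is a finite set `C n` of
branch components, with projections `π n : C (n+1) → C n`, step branch indices
`eStep n : C (n+1) → ℕ`, and cumulative projections `proj n : C m → C n`.
Assume the branched/decomposed dichotomy at each step: over `u ∈ C n` either there is a
unique `w` with `π n w = u` and `eStep n w = p` (branched case), or there are exactly
`p` such `w` and each has `eStep n w = 1` (decomposed case).  If the `λ`-invariants
satisfy the degree-`p` formula `λ(n+1) − 1 = p(λ(n) − 1) + Σ_w (eStep n w − 1)` at each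
step, then, branch indices being multiplicative in towers, the composite formula
`λ(m) − 1 = p^m (λ(0) − 1) + Σ_{w ∈ C m} (e_w − 1)` holds, where
`e_w = Π_{k<m} eStep k (proj (k+1) w)`. -/
theorem kida_induction_step
    (p m : ℕ) (hp : p.Prime)
    (C : ℕ → Type) [∀ n, Fintype (C n)]
    (π : ∀ n, C (n + 1) → C n)
    (eStep : ∀ n, C (n + 1) → ℕ)
    (proj : ∀ n, C m → C n)
    (hproj_top : proj m = id)
    (hproj : ∀ n, n < m → ∀ w : C m, proj n w = π n (proj (n + 1) w))
    (lam : ℕ → ℤ)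
    (hdicho : ∀ n, n < m → ∀ u : C n,
      ((∃! w : C (n + 1), π n w = u) ∧ (∀ w, π n w = u → eStep n w = p)) ∨
      (Nat.card {w : C (n + 1) // π n w = u} = p ∧ ∀ w, π n w = u → eStep n w = 1))
    (hstep : ∀ n, n < m →
      lam (n + 1) - 1 = p * (lam n - 1) + ∑ w : C (n + 1), ((eStep n w : ℤ) - 1)) :
    lam m - 1 = (p : ℤ) ^ m * (lam 0 - 1) +
      ∑ w : C m, ((∏ k ∈ Finset.range m, (eStep k (proj (k + 1) w) : ℤ)) - 1) :=
  kida_induction_step_general p m C π eStep proj hproj_top hproj lam hdicho hstep
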